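/- The head-ordered dependency projection is invariant under collapsing unary proper nodes: for every c-tree C, the head-ordered dependency projection of C equals the head-ordered dependency projection of the unaryless c-tree obtained from C by deleting every unary proper node (attaching its unique child directly to its parent). -/

import Mathlib

/-- A node of a constituent tree: either a pre-terminal over position `i`
(standing for the pre-terminal `(p_i, i, {i})` together with its leaf child `i`),
or a proper node `node Z h cs` with label `Z`, lexical head `h` and children `cs`. -/
inductive CNode (L : ℕ) (Sg : Type) : Type where
  | pre  : Fin L → CNode L Sg
  | node : Sg → Fin L → List (CNode L Sg) → CNode L Sg

namespace CNode

variable {L : ℕ} {Sg : Type}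

/-- The lexical head of a node. -/
def head : CNode L Sg → Fin L
  | pre i => i
  | node _ h _ => h

mutual
  /-- The yield of a node. -/
  def yield : CNode L Sg → Finset (Fin L)
    | pre i => {i}
    | node _ _ cs => yieldList cs
  def yieldList : List (CNode L Sg) → Finset (Fin L)
    | [] => ∅
    | c :: cs => yield c ∪ yieldList cs
end

mutual
  /-- The list of all subtrees (nodes) of a tree, including itself. -/
  def subs : CNode L Sg → List (CNode L Sg)
    | pre i => [pre i]
    | node Z h cs => node Z h cs :: subsList cs
  def subsList : List (CNode L Sg) → List (CNode L Sg)
    | [] => []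
    | c :: cs => subs c ++ subsList cs
end

/-- Well-formedness of a c-tree: children have pairwise disjoint yields and
every proper node has exactly one child whose head is the node's head. -/
inductive Valid : CNode L Sg → Prop where
  | pre (i : Fin L) : Valid (pre i)
  | node (Z : Sg) (h : Fin L) (cs : List (CNode L Sg)) :
      (∀ c ∈ cs, Valid c) →
      cs.Pairwise (fun a b => Disjoint a.yield b.yield) →
      (∃! c, c ∈ cs ∧ head c = h) →
      Valid (node Z h cs)

/-- A c-tree on positions `1,…,L`: a well-formed tree whose leaves are exactly
the `L` positions, each appearing exactly once. -/
def IsCTree (t : CNode L Sg) : Prop := Valid t ∧ t.yield = Finset.univ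

/-- Every proper node has exactly two children. -/
def Binary (t : CNode L Sg) : Prop :=
  ∀ s ∈ t.subs, ∀ Z h cs, s = node Z h cs → cs.length = 2

/-- No proper node has exactly one child. -/
def Unaryless (t : CNode L Sg) : Prop :=
  ∀ s ∈ t.subs, ∀ Z h cs, s = node Z h cs → cs.length ≠ 1

/-- Every node's yield is an interval of consecutive positions. -/
def Continuous (t : CNode L Sg) : Prop :=
  ∀ s ∈ t.subs, ∃ a b : Fin L, s.yield = Finset.Icc a b

/-- `AttachesAt C h m Z n`: `n` is a proper node of `C` with label `Z` and lexical
head `h`, having a (non-head) child whose lexical head is `m ≠ h`;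
i.e. the modifier `m` attaches to `h` at the spine node `n`, generating an arc
`(h, m)` labeled `Z`. -/
def AttachesAt (C : CNode L Sg) (h m : Fin L) (Z : Sg) (n : CNode L Sg) : Prop :=
  n ∈ C.subs ∧ ∃ cs, n = node Z h cs ∧ m ≠ h ∧ ∃ c ∈ cs, head c = m

/-- A proper node with head `h` having at least one non-head child
(i.e. a node of `h`'s spine at which some modifier attaches). -/
def attachB (h : Fin L) : CNode L Sg → Bool
  | pre _ => false
  | node _ h' cs => h' = h && cs.any (fun c => head c != h)

/-- The position, counted from the bottom of the spine of `h`, of the spine node `n`: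
the number of proper nodes with head `h` lying weakly below `n` at which modifiers
attach.  This is the order index (`#1, #2, …`) of the attachment event at `n`. -/
def spineIdx (h : Fin L) (n : CNode L Sg) : ℕ :=
  n.subs.countP (attachB h)

end CNode

/-- An ordered, labeled dependency tree on positions `{1,…,L}` with labels in `Sg`:
`par m = some (h, ℓ, j)` means there is an arc from head `h` to modifier `m`,
carrying label `ℓ` and order index `j` (the position of the attachment event of `m`
in the order of `h`'s modifiers). -/
structure ODTree (L : ℕ) (Sg : Type) : Type where
  root : Fin L
  par : Fin L → Option (Fin L × Sg × ℕ)
  root_par : par root = none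
  reach : ∀ v : Fin L, Relation.ReflTransGen (fun a b => (par b).map (·.1) = some a) root v

namespace ODTree

variable {L : ℕ} {Sg : Type}

/-- The arc relation: `h` is the head of `m`. -/
def arc (D : ODTree L Sg) (h m : Fin L) : Prop := (D.par m).map (·.1) = some h

/-- `D` is a weakly ordered d-tree: for each head, the order indices of its modifiers
are exactly `1, …, J` for some `J` (so they canonically encode a total preorder, i.e.
weak order, on the modifiers), and equivalent modifiers (same index) carry the same
label. -/
def WeaklyOrdered (D : ODTree L Sg) : Prop :=
  (∀ m h ℓ j, D.par m = some (h, ℓ, j) →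
     1 ≤ j ∧ ∀ k, 1 ≤ k → k < j → ∃ m' ℓ', D.par m' = some (h, ℓ', k)) ∧
  (∀ m m' h ℓ ℓ' j, D.par m = some (h, ℓ, j) → D.par m' = some (h, ℓ', j) → ℓ = ℓ')

/-- `D` is a strictly ordered d-tree: additionally, no two modifiers of the same head
share an index, so the indices encode a strict total order on the modifiers. -/
def StrictlyOrdered (D : ODTree L Sg) : Prop :=
  WeaklyOrdered D ∧
  ∀ m m' h ℓ ℓ' j, D.par m = some (h, ℓ, j) → D.par m' = some (h, ℓ', j) → m = m'

/-- Projectivity: for every arc `(h,m)`, every position strictly between `h` and `m`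
is reachable from `h` by a directed path. -/
def Projective (D : ODTree L Sg) : Prop :=
  ∀ h m, D.arc h m → ∀ d : Fin L, min h m < d → d < max h m →
    Relation.ReflTransGen D.arc h d

/-- The nesting property (for weak orders): closer modifiers on the same side of the
head are attached first, i.e. `h < m < m'` or `h > m > m'` implies `m ≺_h m'` or
`m ≡_h m'`, i.e. the index of `m` is at most that of `m'`. -/
def Nested (D : ODTree L Sg) : Prop :=
  ∀ (h m m' : Fin L) (ℓ ℓ' : Sg) (j j' : ℕ),
    D.par m = some (h, ℓ, j) → D.par m' = some (h, ℓ', j') →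
    ((h < m ∧ m < m') ∨ (m' < m ∧ m < h)) → j ≤ j'

/-- The nesting property for strict orders: `h < m < m'` or `h > m > m'` implies
`m ≺_h m'`, i.e. the index of `m` is strictly smaller than that of `m'`. -/
def NestedStrict (D : ODTree L Sg) : Prop :=
  ∀ (h m m' : Fin L) (ℓ ℓ' : Sg) (j j' : ℕ),
    D.par m = some (h, ℓ, j) → D.par m' = some (h, ℓ', j') →
    ((h < m ∧ m < m') ∨ (m' < m ∧ m < h)) → j < j'

end ODTree

/-- `D` is the head-ordered dependency projection of the c-tree `C`:
`D` has an arc `(h, m)` with label `Z` and order index `j` exactly when some proper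
node `n` of `C` with label `Z` and head `h` has a non-head child headed `m`, and `j`
is the position of `n` among the attachment nodes of `h`'s spine, counted from the
bottom (so modifiers attaching at lower spine nodes get smaller indices, and
modifiers attaching at the same spine node get the same index). -/
def IsProjection {L : ℕ} {Sg : Type} (C : CNode L Sg) (D : ODTree L Sg) : Prop :=
  ∀ (h m : Fin L) (ℓ : Sg) (j : ℕ),
    D.par m = some (h, ℓ, j) ↔ ∃ n, CNode.AttachesAt C h m ℓ n ∧ j = CNode.spineIdx h n

namespace CNode

variable {L : ℕ} {Sg : Type}

mutual
  /-- Delete every unary proper node, attaching its unique child directly to its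
  parent (a unary proper node `node Z h [c]` is replaced by the collapse of `c`). -/
  def collapse : CNode L Sg → CNode L Sg
    | pre i => pre i
    | node _ _ [c] => collapse c
    | node Z h cs => node Z h (collapseList cs)
  def collapseList : List (CNode L Sg) → List (CNode L Sg)
    | [] => []
    | c :: cs => collapse c :: collapseList cs
end

end CNode

/-! A unary proper node's only child is its head child, so it generates no arc and is not an
attachment node of any spine.  Collapsing deletes exactly these nodes and sends every other node
`n` to a node with the same label and head whose children are the collapses of those of `n`
(with the same heads); hence the subtrees of `collapse C` are the images of the non-unary
subtrees of `C`, and attachments, labels and spine indices all survive. -/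

namespace CNode

variable {L : ℕ} {Sg : Type}

def isUnary : CNode L Sg → Bool
  | node _ _ [_] => true
  | _ => false

theorem collapseList_eq_map : ∀ cs : List (CNode L Sg), collapseList cs = cs.map collapse
  | [] => rfl
  | c :: cs => by rw [collapseList, List.map_cons, collapseList_eq_map]

theorem collapse_node_of_not_isUnary {Z : Sg} {h : Fin L} {cs : List (CNode L Sg)}
    (hn : (node Z h cs).isUnary = false) :
    collapse (node Z h cs) = node Z h (cs.map collapse) := by
  rw [← collapseList_eq_map]
  match cs, hn with
  | [], _ => rfl
  | _ :: _ :: _, _ => rfl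

theorem subsList_singleton (c : CNode L Sg) : subsList [c] = subs c := by
  simp [subsList]

mutual
theorem subs_collapse : ∀ t : CNode L Sg,
    (collapse t).subs = (t.subs.filter (! ·.isUnary)).map collapse
  | pre _ => rfl
  | node _ _ [c] => by
    simp only [collapse, subs, subsList_singleton, isUnary, List.filter_cons_of_neg,
      Bool.not_true, Bool.false_eq_true, not_false_eq_true]
    exact subs_collapse c
  | node Z h [] => by simp [collapse, collapseList, subs, subsList, isUnary]
  | node Z h (a :: b :: cs) => by
    show node Z h _ :: _ = _
    rw [subs, List.filter_cons_of_pos (by rfl), List.map_cons, subsList_collapseList]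
    rfl
theorem subsList_collapseList : ∀ cs : List (CNode L Sg),
    subsList (collapseList cs) = ((subsList cs).filter (! ·.isUnary)).map collapse
  | [] => rfl
  | c :: cs => by
    rw [collapseList, subsList, subsList, List.filter_append, List.map_append,
      subs_collapse, subsList_collapseList]
end

theorem mem_subs_collapse {t n' : CNode L Sg} :
    n' ∈ (collapse t).subs ↔ ∃ n ∈ t.subs, n.isUnary = false ∧ collapse n = n' := by
  simp [subs_collapse, and_assoc]

theorem Valid.of_mem_children {Z : Sg} {h : Fin L} {cs : List (CNode L Sg)}
    (hv : Valid (CNode.node Z h cs)) {c : CNode L Sg} (hc : c ∈ cs) : Valid c := by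
  cases hv with
  | node _ _ _ hchildren _ _ => exact hchildren c hc

theorem Valid.head_eq_of_unary {Z : Sg} {h : Fin L} {c : CNode L Sg}
    (hv : Valid (CNode.node Z h [c])) : head c = h := by
  cases hv with
  | node _ _ _ _ _ hhead =>
    obtain ⟨c', ⟨hc', hc'h⟩, -⟩ := hhead
    rwa [List.mem_singleton.mp hc'] at hc'h

mutual
theorem Valid.of_mem_subs : ∀ {t : CNode L Sg}, Valid t → ∀ {n}, n ∈ t.subs → Valid n
  | .pre _, hv, _, hn => by rwa [List.mem_singleton.mp hn]
  | .node _ _ _, hv, _, hn => by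
    rcases List.mem_cons.mp hn with rfl | hn
    · exact hv
    · exact Valid.of_mem_subsList (fun _ hc => hv.of_mem_children hc) hn
theorem Valid.of_mem_subsList : ∀ {cs : List (CNode L Sg)}, (∀ c ∈ cs, Valid c) →
    ∀ {n}, n ∈ subsList cs → Valid n
  | _ :: _, hv, _, hn => by
    rcases List.mem_append.mp hn with hn | hn
    · exact Valid.of_mem_subs (hv _ List.mem_cons_self) hn
    · exact Valid.of_mem_subsList (fun c hc => hv c (List.mem_cons_of_mem _ hc)) hn
end

theorem head_collapse : ∀ {t : CNode L Sg}, Valid t → head (collapse t) = head t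
  | pre _, _ => rfl
  | node _ h [c], hv => by
    change head (collapse c) = h
    rw [head_collapse (hv.of_mem_children List.mem_cons_self), hv.head_eq_of_unary]
  | node _ _ [], _ => rfl
  | node _ _ (_ :: _ :: _), _ => rfl

theorem attachB_of_isUnary (h : Fin L) {n : CNode L Sg} (hv : Valid n) (hn : n.isUnary) :
    attachB h n = false := by
  match n, hn with
  | node _ h' [_], _ =>
    rcases eq_or_ne h' h with rfl | h'h
    · simp [attachB, hv.head_eq_of_unary]
    · simp [attachB, h'h]

theorem attachB_collapse_of_not_isUnary (h : Fin L) {n : CNode L Sg} (hv : Valid n)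
    (hn : n.isUnary = false) : attachB h (collapse n) = attachB h n := by
  match n, hn with
  | .pre _, _ => rfl
  | .node _ _ cs, hn =>
    rw [collapse_node_of_not_isUnary hn]
    simp only [attachB, List.any_map]
    congr 1
    rw [Bool.eq_iff_iff, List.any_eq_true, List.any_eq_true]
    exact exists_congr fun c => and_congr_right fun hc => by
      rw [Function.comp_apply, head_collapse (hv.of_mem_children hc)]

theorem spineIdx_collapse (h : Fin L) {t : CNode L Sg} (hv : Valid t) :
    spineIdx h (collapse t) = spineIdx h t := by
  rw [spineIdx, spineIdx, subs_collapse, List.countP_map, List.countP_filter]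
  refine List.countP_congr fun n hn => ?_
  have hvn := hv.of_mem_subs hn
  cases hu : n.isUnary
  · simp [attachB_collapse_of_not_isUnary h hvn hu]
  · simp [attachB_of_isUnary h hvn hu]

theorem attachesAt_collapse_iff {C : CNode L Sg} (hC : Valid C) {h m : Fin L} {ℓ : Sg}
    {n' : CNode L Sg} :
    AttachesAt (collapse C) h m ℓ n' ↔ ∃ n, AttachesAt C h m ℓ n ∧ collapse n = n' := by
  constructor
  · rintro ⟨hn', cs', rfl, hmh, c', hc', rfl⟩
    obtain ⟨n, hn, hnu, hcol⟩ := mem_subs_collapse.mp hn'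
    match n, hnu, hcol with
    | .node _ _ cs, hnu, hcol =>
      rw [collapse_node_of_not_isUnary hnu, node.injEq] at hcol
      obtain ⟨rfl, rfl, rfl⟩ := hcol
      obtain ⟨c, hc, rfl⟩ := List.mem_map.mp hc'
      have hvc := (hC.of_mem_subs hn).of_mem_children hc
      exact ⟨_, ⟨hn, cs, rfl, hmh, c, hc, (head_collapse hvc).symm⟩,
        collapse_node_of_not_isUnary hnu⟩
  · rintro ⟨n, ⟨hn, cs, rfl, hmh, c, hc, rfl⟩, rfl⟩
    have hv := hC.of_mem_subs hn
    have hnu : (node ℓ h cs).isUnary = false := by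
      match cs, hc with
      | [_], hc => exact absurd (List.mem_singleton.mp hc ▸ hv.head_eq_of_unary) hmh
      | [], _ | _ :: _ :: _, _ => rfl
    rw [collapse_node_of_not_isUnary hnu]
    refine ⟨?_, _, rfl, hmh, collapse c, List.mem_map_of_mem hc,
      head_collapse (hv.of_mem_children hc)⟩
    rw [← collapse_node_of_not_isUnary hnu]
    exact mem_subs_collapse.mpr ⟨_, hn, hnu, rfl⟩

theorem isProjection_collapse_iff {C : CNode L Sg} (hC : Valid C) (D : ODTree L Sg) :
    IsProjection C D ↔ IsProjection (collapse C) D := by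
  refine forall₄_congr fun h m ℓ j => iff_congr Iff.rfl ⟨?_, ?_⟩
  · rintro ⟨n, hn, rfl⟩
    exact ⟨_, attachesAt_collapse_iff hC |>.mpr ⟨n, hn, rfl⟩,
      (spineIdx_collapse h (hC.of_mem_subs hn.1)).symm⟩
  · rintro ⟨_, hn', rfl⟩
    obtain ⟨n, hn, rfl⟩ := attachesAt_collapse_iff hC |>.mp hn'
    exact ⟨n, hn, spineIdx_collapse h (hC.of_mem_subs hn.1)⟩

end CNode

/-- The head-ordered dependency projection is invariant under
collapsing unary proper nodes: for every c-tree `C`, the head-ordered dependency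
projection of `C` equals the head-ordered dependency projection of the unaryless
c-tree obtained from `C` by deleting every unary proper node. -/
theorem stmt9 (L : ℕ) (Sg P : Type) [Fintype Sg] (pos : Fin L → P)
    (C : CNode L Sg) (hC : CNode.IsCTree C) :
    ∀ D : ODTree L Sg, IsProjection C D ↔ IsProjection C.collapse D :=
  CNode.isProjection_collapse_iff hC.1
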